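/- Let n = 2^r for some positive integer r, and let x_0 ∈ ℝ^n with x̄_0 = (1/n) ∑_{i=1}^n x_{0,i}. Then for the repeated averaging chain under the measure μ_n, with probability 1 there exists K such that for all k ≥ K, x_k is the constant vector (x̄_0, …, x̄_0); that is, μ_n-almost every pair sequence ω admits some K with x_k(ω) = (x̄_0, …, x̄_0) for all k ≥ K. -/

import Mathlib

open MeasureTheory Finset Filter
open scoped ENNReal NNReal

/-- The set of unordered pairs of distinct indices in `Fin n`, encoded as
2-element subsets of `Fin n`. -/
abbrev Pairs (n : ℕ) : Type := {s : Finset (Fin n) // s.card = 2}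

instance (n : ℕ) : MeasurableSpace (Pairs n) := ⊤

/-- The uniform probability measure on the set of pairs. -/
noncomputable def uniformPair (n : ℕ) : Measure (Pairs n) :=
  (Fintype.card (Pairs n) : ℝ≥0∞)⁻¹ • Measure.count

/-- `μ` is the infinite product over `ℕ` of the uniform measure on pairs:
its finite-dimensional marginals are the finite uniform product measures.
(This characterizes the infinite product measure uniquely.) -/
def IsProductLaw (n : ℕ) (μ : Measure (ℕ → Pairs n)) : Prop :=
  ∀ K : ℕ, μ.map (fun ω (i : Fin K) => ω i) = Measure.pi fun _ : Fin K => uniformPair n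

/-- The pair-averaging operation: both coordinates in `s` (a 2-element set `{i,j}`)
are replaced by `(x i + x j)/2`; the other coordinates are unchanged. -/
noncomputable def avgStep {n : ℕ} (s : Finset (Fin n)) (x : Fin n → ℝ) : Fin n → ℝ :=
  fun l => if l ∈ s then (∑ m ∈ s, x m) / 2 else x l

/-- The repeated averaging chain started at `x0`, driven by the pair sequence `ω`. -/
noncomputable def chain {n : ℕ} (x0 : Fin n → ℝ) (ω : ℕ → Pairs n) : ℕ → Fin n → ℝ
  | 0 => x0
  | k + 1 => avgStep (ω k).1 (chain x0 ω k)

/-- `T(k) = ∑_i |x_{k,i} - 1/n|`. -/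
noncomputable def Tdist {n : ℕ} (x0 : Fin n → ℝ) (ω : ℕ → Pairs n) (k : ℕ) : ℝ :=
  ∑ i, |chain x0 ω k i - 1 / n|

/-- The initial vector `(1,0,…,0)`. -/
def e1 (n : ℕ) : Fin n → ℝ := fun i => if i.val = 0 then 1 else 0

/-- The standard normal cumulative distribution function. -/
noncomputable def stdGaussianCDF (x : ℝ) : ℝ :=
  ∫ t in Set.Iic x, (2 * Real.pi) ^ (-(1:ℝ)/2) * Real.exp (-t ^ 2 / 2)

/-!
For `n = 2 ^ r` there is a finite word of pairs that drives every starting vector to a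
constant one: run a word for `2 ^ (r - 1)` coordinates on each half, then average every
coordinate of the left half with its mirror in the right half. Under the product law a fixed
word of length `L` is missed by each of `M` disjoint blocks of `ω` with probability
`(1 - N⁻¹ ^ L) ^ M → 0`, `N` being the number of pairs, so it almost surely occurs. After that
occurrence the chain is a constant vector, which every later step fixes, and since averaging
preserves the coordinate sum, the constant is the mean of `x₀`.
-/

section

variable {n : ℕ}

noncomputable def applyWord (l : List (Pairs n)) (x : Fin n → ℝ) : Fin n → ℝ :=
  l.foldl (fun y s => avgStep s.1 y) x

@[simp] lemma applyWord_nil (x : Fin n → ℝ) : applyWord [] x = x := rfl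

@[simp] lemma applyWord_cons (s : Pairs n) (l : List (Pairs n)) (x : Fin n → ℝ) :
    applyWord (s :: l) x = applyWord l (avgStep s.1 x) := rfl

lemma applyWord_append (l₁ l₂ : List (Pairs n)) (x : Fin n → ℝ) :
    applyWord (l₁ ++ l₂) x = applyWord l₂ (applyWord l₁ x) :=
  List.foldl_append

lemma avgStep_of_mem {s : Finset (Fin n)} (x : Fin n → ℝ) {j : Fin n} (h : j ∈ s) :
    avgStep s x j = (∑ m ∈ s, x m) / 2 := if_pos h

lemma avgStep_of_notMem {s : Finset (Fin n)} (x : Fin n → ℝ) {j : Fin n} (h : j ∉ s) :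
    avgStep s x j = x j := if_neg h

lemma sum_avgStep {s : Finset (Fin n)} (hs : s.card = 2) (x : Fin n → ℝ) :
    ∑ i, avgStep s x i = ∑ i, x i := by
  classical
  rw [← sum_add_sum_compl s, ← sum_add_sum_compl s x,
    sum_congr rfl fun i hi => avgStep_of_mem x hi,
    sum_congr rfl fun i hi => avgStep_of_notMem x (mem_compl.mp hi), sum_const, hs]
  ring

lemma avgStep_const {s : Finset (Fin n)} (hs : s.card = 2) (c : ℝ) :
    avgStep s (fun _ => c) = fun _ => c := by
  funext j
  by_cases hj : j ∈ s
  · rw [avgStep_of_mem _ hj, sum_const, hs]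
    ring
  · exact avgStep_of_notMem _ hj

lemma applyWord_of_forall_notMem {l : List (Pairs n)} (x : Fin n → ℝ) {j : Fin n}
    (hj : ∀ s ∈ l, j ∉ s.1) : applyWord l x j = x j := by
  induction l generalizing x with
  | nil => rfl
  | cons s l ih =>
    rw [applyWord_cons, ih _ fun t ht => hj t (.tail s ht),
      avgStep_of_notMem _ (hj s List.mem_cons_self)]

/-- On a pairwise disjoint word each pair is averaged once, against values no earlier step
has touched. -/
lemma applyWord_of_pairwise_disjoint {l : List (Pairs n)} {x : Fin n → ℝ} {c : ℝ}
    (hl : l.Pairwise fun s t => Disjoint s.1 t.1) (hx : ∀ s ∈ l, (∑ m ∈ s.1, x m) / 2 = c)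
    {j : Fin n} (hj : ∃ s ∈ l, j ∈ s.1) : applyWord l x j = c := by
  induction l generalizing x with
  | nil => simp at hj
  | cons s l ih =>
    obtain ⟨hs, hl⟩ := List.pairwise_cons.mp hl
    rw [applyWord_cons]
    by_cases hjl : ∃ t ∈ l, j ∈ t.1
    · refine ih hl (fun t ht => ?_) hjl
      rw [← hx t (.tail s ht)]
      congr 1
      exact sum_congr rfl fun m hm =>
        avgStep_of_notMem x (disjoint_right.mp (hs t ht) hm)
    · push Not at hjl
      have hjs : j ∈ s.1 := by
        obtain ⟨t, ht, hjt⟩ := hj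
        rcases List.mem_cons.mp ht with rfl | ht
        · exact hjt
        · exact absurd hjt (hjl t ht)
      rw [applyWord_of_forall_notMem _ hjl, avgStep_of_mem x hjs, hx s List.mem_cons_self]

def Pairs.map {m : ℕ} (e : Fin n ↪ Fin m) (s : Pairs n) : Pairs m :=
  ⟨s.1.map e, by rw [card_map, s.2]⟩

lemma avgStep_map_apply {m : ℕ} (e : Fin n ↪ Fin m) (s : Finset (Fin n)) (x : Fin m → ℝ)
    (i : Fin n) : avgStep (s.map e) x (e i) = avgStep s (x ∘ e) i := by
  simp only [avgStep, Finset.mem_map', sum_map, Function.comp]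

lemma applyWord_map_apply {m : ℕ} (e : Fin n ↪ Fin m) (l : List (Pairs n)) (x : Fin m → ℝ)
    (i : Fin n) : applyWord (l.map (Pairs.map e)) x (e i) = applyWord l (x ∘ e) i := by
  induction l generalizing x with
  | nil => rfl
  | cons s l ih =>
    rw [List.map_cons, applyWord_cons, applyWord_cons, ih]
    congr 2
    funext i
    exact avgStep_map_apply e s.1 x i

lemma applyWord_map_of_notMem_range {m : ℕ} (e : Fin n ↪ Fin m) (l : List (Pairs n))
    (x : Fin m → ℝ) {j : Fin m} (hj : j ∉ Set.range e) :
    applyWord (l.map (Pairs.map e)) x j = x j := by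
  refine applyWord_of_forall_notMem x fun s hs hjs => hj ?_
  obtain ⟨t, -, rfl⟩ := List.mem_map.mp hs
  obtain ⟨i, -, rfl⟩ := mem_map.mp hjs
  exact ⟨i, rfl⟩

def IsConsensusWord (l : List (Pairs n)) : Prop :=
  ∀ x : Fin n → ℝ, ∃ c : ℝ, applyWord l x = fun _ => c

lemma castAdd_ne_natAdd (i j : Fin n) : Fin.castAdd n i ≠ Fin.natAdd n j := by
  rw [ne_eq, Fin.ext_iff, Fin.val_castAdd, Fin.val_natAdd]
  omega

def crossPair (i : Fin n) : Pairs (n + n) :=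
  ⟨{Fin.castAdd n i, Fin.natAdd n i}, card_pair (castAdd_ne_natAdd i i)⟩

lemma pairwise_disjoint_crossPair :
    (List.ofFn (crossPair (n := n))).Pairwise fun s t => Disjoint s.1 t.1 := by
  refine List.pairwise_ofFn.mpr fun i j hij => ?_
  rw [Fin.lt_def] at hij
  simp only [crossPair, disjoint_insert_left, disjoint_insert_right, disjoint_singleton,
    mem_insert, mem_singleton, ne_eq, Fin.ext_iff, Fin.val_castAdd, Fin.val_natAdd]
  omega

lemma IsConsensusWord.double {l : List (Pairs n)} (hl : IsConsensusWord l) :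
    IsConsensusWord (l.map (Pairs.map (Fin.castAddEmb n)) ++ l.map (Pairs.map (Fin.natAddEmb n))
      ++ List.ofFn crossPair) := by
  intro x
  set y := applyWord (l.map (Pairs.map (Fin.castAddEmb n))) x
  obtain ⟨a, ha⟩ := hl (x ∘ Fin.castAdd n)
  obtain ⟨b, hb⟩ := hl (y ∘ Fin.natAdd n)
  have hleft (i : Fin n) :
      applyWord (l.map (Pairs.map (Fin.natAddEmb n))) y (Fin.castAdd n i) = a := by
    rw [applyWord_map_of_notMem_range _ _ _ fun ⟨j, hj⟩ => castAdd_ne_natAdd i j hj.symm]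
    exact (applyWord_map_apply (Fin.castAddEmb n) l x i).trans (congrFun ha i)
  have hright (i : Fin n) :
      applyWord (l.map (Pairs.map (Fin.natAddEmb n))) y (Fin.natAdd n i) = b :=
    (applyWord_map_apply (Fin.natAddEmb n) l y i).trans (congrFun hb i)
  refine ⟨(a + b) / 2, funext fun j => ?_⟩
  rw [applyWord_append, applyWord_append]
  refine applyWord_of_pairwise_disjoint pairwise_disjoint_crossPair ?_ ?_
  · intro s hs
    obtain ⟨i, rfl⟩ := List.mem_ofFn.mp hs
    rw [crossPair, sum_pair (castAdd_ne_natAdd i i), hleft, hright]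
  · refine Fin.addCases (fun i => ?_) (fun i => ?_) j
    · exact ⟨crossPair i, List.mem_ofFn.mpr ⟨i, rfl⟩, by simp [crossPair]⟩
    · exact ⟨crossPair i, List.mem_ofFn.mpr ⟨i, rfl⟩, by simp [crossPair]⟩

lemma exists_isConsensusWord_pow_two (r : ℕ) :
    ∃ l : List (Pairs (2 ^ r)), IsConsensusWord l := by
  induction r with
  | zero =>
    rw [pow_zero]
    exact ⟨[], fun x => ⟨x 0, funext fun j => congrArg x (Subsingleton.elim j 0)⟩⟩
  | succ r ih =>
    obtain ⟨l, hl⟩ := ih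
    rw [pow_succ, mul_two]
    exact ⟨_, hl.double⟩

lemma sum_chain (x0 : Fin n → ℝ) (ω : ℕ → Pairs n) (k : ℕ) :
    ∑ i, chain x0 ω k i = ∑ i, x0 i := by
  induction k with
  | zero => rfl
  | succ k ih => rw [chain, sum_avgStep (ω k).2, ih]

lemma chain_add_length {x0 : Fin n → ℝ} {ω : ℕ → Pairs n} {k : ℕ} {l : List (Pairs n)}
    (h : ∀ j : Fin l.length, ω (k + j) = l.get j) :
    chain x0 ω (k + l.length) = applyWord l (chain x0 ω k) := by
  induction l generalizing k with
  | nil => rfl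
  | cons s l ih =>
    have hk : ω k = s := h ⟨0, by simp⟩
    rw [List.length_cons, ← add_assoc, add_right_comm, ih fun j => ?_, chain, hk, applyWord_cons]
    simpa [add_right_comm, add_assoc] using h j.succ

lemma chain_eq_const_of_le {x0 : Fin n → ℝ} {ω : ℕ → Pairs n} {K k : ℕ} {c : ℝ}
    (hK : chain x0 ω K = fun _ => c) (hk : K ≤ k) : chain x0 ω k = fun _ => c := by
  induction k, hk using Nat.le_induction with
  | base => exact hK
  | succ k _ ih => rw [chain, ih, avgStep_const (ω k).2]

lemma eq_average_of_eq_const {y : Fin n → ℝ} {c : ℝ} (h : y = fun _ => c) :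
    y = fun _ => (∑ i, y i) / n := by
  rcases Nat.eq_zero_or_pos n with rfl | hn
  · exact funext fun i => i.elim0
  · subst h
    simp only [sum_const, card_univ, Fintype.card_fin, nsmul_eq_mul]
    field_simp

section Blocks

variable {α : Type*} [Fintype α] [DecidableEq α]

/-- Sequences of length `M * L` none of whose `M` consecutive blocks of length `L` is `w`. -/
def avoidingBlocks (M : ℕ) {L : ℕ} (w : Fin L → α) : Finset (Fin (M * L) → α) :=
  (Fintype.piFinset fun _ : Fin M => ({w}ᶜ : Finset (Fin L → α))).map
    ((Equiv.curry _ _ _).symm.trans (finProdFinEquiv.arrowCongr (Equiv.refl α))).toEmbedding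

lemma mem_avoidingBlocks {M L : ℕ} {w : Fin L → α} {f : Fin (M * L) → α} :
    f ∈ avoidingBlocks M w ↔ ∀ m : Fin M, (fun j => f (finProdFinEquiv (m, j))) ≠ w := by
  rw [avoidingBlocks, Finset.mem_map_equiv, Fintype.mem_piFinset]
  simp only [mem_compl, mem_singleton]
  rfl

lemma card_avoidingBlocks (M : ℕ) {L : ℕ} (w : Fin L → α) :
    (avoidingBlocks M w).card = (Fintype.card α ^ L - 1) ^ M := by
  simp [avoidingBlocks, Fintype.card_piFinset, card_compl]

end Blocks

instance : IsFiniteMeasure (uniformPair n) :=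
  ⟨by
    rw [uniformPair, Measure.smul_apply, Measure.count_univ, smul_eq_mul,
      ENat.card_eq_coe_fintype_card, ENat.toENNReal_coe]
    exact (ENNReal.inv_mul_le_one _).trans_lt ENNReal.one_lt_top⟩

lemma pi_uniformPair_apply_finset {K : ℕ} (s : Finset (Fin K → Pairs n)) :
    Measure.pi (fun _ => uniformPair n) (s : Set (Fin K → Pairs n)) =
      s.card * (Fintype.card (Pairs n) : ℝ≥0∞)⁻¹ ^ K := by
  have hsingleton (f : Fin K → Pairs n) :
      Measure.pi (fun _ => uniformPair n) {f} = (Fintype.card (Pairs n) : ℝ≥0∞)⁻¹ ^ K := by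
    rw [← Set.univ_pi_singleton, Measure.pi_pi]
    simp [uniformPair]
  rw [← sum_measure_singleton, sum_congr rfl fun f _ => hsingleton f, sum_const, nsmul_eq_mul]

/-- Infinite monkey theorem. -/
lemma ae_exists_block_eq {μ : Measure (ℕ → Pairs n)} (hμ : IsProductLaw n μ)
    (w : List (Pairs n)) : ∀ᵐ ω ∂μ, ∃ k, ∀ j : Fin w.length, ω (k + j) = w.get j := by
  set L := w.length
  rcases Nat.eq_zero_or_pos L with hL | hL
  · exact ae_of_all _ fun _ => ⟨0, fun j => absurd j.isLt (by omega)⟩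
  set N := Fintype.card (Pairs n)
  set ρ : ℝ≥0∞ := (N ^ L - 1 : ℕ) * ((N : ℝ≥0∞) ^ L)⁻¹ with hρdef
  have hρ : ρ < 1 := by
    have hN : 0 < N := Fintype.card_pos_iff.mpr ⟨w.get ⟨0, hL⟩⟩
    rw [hρdef, ← div_eq_mul_inv, ENNReal.div_lt_iff (.inl (by positivity))
      (.inl (ENNReal.pow_ne_top (ENNReal.natCast_ne_top N))), one_mul]
    exact_mod_cast Nat.sub_lt (pow_pos hN L) one_pos
  rw [ae_iff]
  refine le_antisymm (ge_of_tendsto' (ENNReal.tendsto_pow_atTop_nhds_zero_of_lt_one hρ)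
    fun M => ?_) bot_le
  have hsub : {ω : ℕ → Pairs n | ¬ ∃ k, ∀ j : Fin L, ω (k + j) = w.get j} ⊆
      (fun ω (i : Fin (M * L)) => ω i) ⁻¹' (avoidingBlocks M w.get : Set _) := by
    refine fun ω hω => mem_avoidingBlocks.mpr fun m hm => hω ⟨L * m, fun j => ?_⟩
    rw [← congrFun hm j]
    dsimp only
    rw [finProdFinEquiv_apply_val, add_comm]
  calc _ ≤ μ ((fun ω (i : Fin (M * L)) => ω i) ⁻¹' (avoidingBlocks M w.get : Set _)) :=
        measure_mono hsub
    _ = Measure.pi (fun _ => uniformPair n) (avoidingBlocks M w.get : Set _) := by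
      rw [← Measure.map_apply (by fun_prop) (Finset.measurableSet _), hμ]
    _ = ρ ^ M := by
      rw [pi_uniformPair_apply_finset, card_avoidingBlocks, hρdef, mul_pow, Nat.cast_pow,
        mul_comm M L, pow_mul, ENNReal.inv_pow]

end

theorem as_finite_termination_pow_two_general (n r : ℕ) (hn : n = 2 ^ r)
    (μ : Measure (ℕ → Pairs n)) (hμ : IsProductLaw n μ) (x0 : Fin n → ℝ) :
    ∀ᵐ ω ∂μ, ∃ K : ℕ, ∀ k : ℕ, K ≤ k →
      chain x0 ω k = fun _ => (∑ i, x0 i) / n := by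
  subst hn
  obtain ⟨l, hl⟩ := exists_isConsensusWord_pow_two r
  filter_upwards [ae_exists_block_eq hμ l] with ω ⟨k, hk⟩
  obtain ⟨c, hc⟩ := hl (chain x0 ω k)
  refine ⟨k + l.length, fun k' hk' => ?_⟩
  have hconst := chain_eq_const_of_le ((chain_add_length hk).trans hc) hk'
  rw [eq_average_of_eq_const hconst, sum_chain]

/-- **Almost sure finite termination for powers of 2.** If `n = 2^r` (`r ≥ 1`), then for
any initial vector `x₀`, `μₙ`-almost every pair sequence `ω` admits some `K` such that
`x_k(ω)` equals the constant vector `(x̄₀,…,x̄₀)` for all `k ≥ K`. -/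
theorem as_finite_termination_pow_two (n r : ℕ) (hr : 1 ≤ r) (hn : n = 2 ^ r)
    (μ : Measure (ℕ → Pairs n)) (hμ : IsProductLaw n μ) (x0 : Fin n → ℝ) :
    ∀ᵐ ω ∂μ, ∃ K : ℕ, ∀ k : ℕ, K ≤ k →
      chain x0 ω k = fun _ => (∑ i, x0 i) / n :=
  as_finite_termination_pow_two_general n r hn μ hμ x0
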